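/- arXiv:2505.16996 — 3 statements merged into one kernel-verified Lean document; each statement's English description precedes it below -/
import Mathlib

section
/- Suppose β₁, β₂ ∈ ℝ and u₁, u₂ : ℝᵏ → ℝ both explain the same data: for all x in a set S, β₁·g(H(x)) + C(x)·u₁(H(x)) + d(x) = β₂·g(H(x)) + C(x)·u₂(H(x)) + d(x). If there exist x₁, x₂ ∈ S with H(x₁) = H(x₂), C(x₁) ≠ C(x₂), and g(H(x₁)) ≠ 0, then β₁ = β₂, and u₁(H(x)) = u₂(H(x)) for every x ∈ S with C(x) ≠ 0. -/
theorem stmt_2 {n k : ℕ} (S : Set (Fin n → ℝ)) (H : (Fin n → ℝ) → (Fin k → ℝ))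
    (C d : (Fin n → ℝ) → ℝ) (g : (Fin k → ℝ) → ℝ)
    (β₁ β₂ : ℝ) (u₁ u₂ : (Fin k → ℝ) → ℝ)
    (hdata : ∀ x ∈ S, β₁ * g (H x) + C x * u₁ (H x) + d x
                     = β₂ * g (H x) + C x * u₂ (H x) + d x)
    (x₁ x₂ : Fin n → ℝ) (hx₁ : x₁ ∈ S) (hx₂ : x₂ ∈ S)
    (hH : H x₁ = H x₂) (hC : C x₁ ≠ C x₂) (hg : g (H x₁) ≠ 0) :
    β₁ = β₂ ∧ ∀ x ∈ S, C x ≠ 0 → u₁ (H x) = u₂ (H x) := by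
  have e1 := hdata x₁ hx₁
  have e2 := hdata x₂ hx₂
  rw [← hH] at e2
  have hu : u₁ (H x₁) = u₂ (H x₁) := by
    have h' : (C x₁ - C x₂) * (u₁ (H x₁) - u₂ (H x₁)) = 0 := by nlinarith
    have := sub_ne_zero.mpr hC
    have := mul_eq_zero.mp h'
    rcases this with h | h
    · exact absurd h ‹_›
    · linarith [sub_eq_zero.mp h]
  have hβ : β₁ = β₂ := by
    rw [hu] at e1
    have h' : β₁ * g (H x₁) = β₂ * g (H x₁) := by linarith
    exact mul_right_cancel₀ hg h'
  refine ⟨hβ, fun x hx hCx => ?_⟩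
  have e := hdata x hx
  rw [hβ] at e
  have h' : C x * (u₁ (H x) - u₂ (H x)) = 0 := by nlinarith
  rcases mul_eq_zero.mp h' with h | h
  · exact absurd h hCx
  · linarith [sub_eq_zero.mp h]
end

section
/- Suppose vᵢ = g(yᵢ) + C(xᵢ)·u(yᵢ) and vⱼ = g(yⱼ) + C(xⱼ)·u(yⱼ), where g is L₁-Lipschitz, u is L₂-Lipschitz, |yᵢ − yⱼ| ≤ D, and C(xᵢ) > C(xⱼ) > 0. Then |u(yᵢ) − (vᵢ − vⱼ)/(C(xᵢ) − C(xⱼ))| ≤ D·(L₁ + C(xⱼ)·L₂)/(C(xᵢ) − C(xⱼ)). -/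
theorem stmt_8 (g u : ℝ → ℝ) (L₁ L₂ D yi yj ci cj vi vj : ℝ)
    (hL₁ : 0 ≤ L₁) (hL₂ : 0 ≤ L₂) (hD : 0 ≤ D)
    (hLipg : ∀ a b : ℝ, |g a - g b| ≤ L₁ * |a - b|)
    (hLipu : ∀ a b : ℝ, |u a - u b| ≤ L₂ * |a - b|)
    (hy : |yi - yj| ≤ D) (hc : ci > cj) (hcj : cj > 0)
    (hvi : vi = g yi + ci * u yi)
    (hvj : vj = g yj + cj * u yj) :
    |u yi - (vi - vj) / (ci - cj)| ≤ D * (L₁ + cj * L₂) / (ci - cj) := by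
  have hpos : (0:ℝ) < ci - cj := by linarith
  have key : u yi - (vi - vj) / (ci - cj)
      = (-(g yi - g yj) - cj * (u yi - u yj)) / (ci - cj) := by
    field_simp
    ring_nf
    nlinarith [hvi, hvj]
  rw [key, abs_div, abs_of_pos hpos]
  gcongr
  have h1 : |g yi - g yj| ≤ L₁ * D := le_trans (hLipg yi yj)
    (mul_le_mul_of_nonneg_left hy hL₁)
  have h2 : |u yi - u yj| ≤ L₂ * D := le_trans (hLipu yi yj)
    (mul_le_mul_of_nonneg_left hy hL₂)
  calc |-(g yi - g yj) - cj * (u yi - u yj)|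
      ≤ |g yi - g yj| + cj * |u yi - u yj| := by
        calc |-(g yi - g yj) - cj * (u yi - u yj)|
            ≤ |-(g yi - g yj)| + |cj * (u yi - u yj)| := abs_sub _ _
          _ = |g yi - g yj| + cj * |u yi - u yj| := by
              rw [abs_neg, abs_mul, abs_of_pos hcj]
    _ ≤ L₁ * D + cj * (L₂ * D) := by nlinarith
    _ = D * (L₁ + cj * L₂) := by ring
end

section
/- Under the hypotheses vᵢ = g(yᵢ) + C(xᵢ)·u(yᵢ), vⱼ = g(yⱼ) + C(xⱼ)·u(yⱼ), g L₁-Lipschitz, u L₂-Lipschitz, |yᵢ − yⱼ| ≤ D, C(xᵢ) > C(xⱼ) > 0, define ḡ(yᵢ) := vᵢ − C(xᵢ)·(vᵢ − vⱼ)/(C(xᵢ) − C(xⱼ)). Then |g(yᵢ) − ḡ(yᵢ)| ≤ C(xᵢ)·D·(L₁ + C(xⱼ)·L₂)/(C(xᵢ) − C(xⱼ)). -/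
theorem stmt_9 (g u : ℝ → ℝ) (L₁ L₂ D yi yj ci cj vi vj : ℝ)
    (hL₁ : 0 ≤ L₁) (hL₂ : 0 ≤ L₂) (hD : 0 ≤ D)
    (hLipg : ∀ a b : ℝ, |g a - g b| ≤ L₁ * |a - b|)
    (hLipu : ∀ a b : ℝ, |u a - u b| ≤ L₂ * |a - b|)
    (hy : |yi - yj| ≤ D) (hc : ci > cj) (hcj : cj > 0)
    (hvi : vi = g yi + ci * u yi)
    (hvj : vj = g yj + cj * u yj) :
    |g yi - (vi - ci * (vi - vj) / (ci - cj))|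
      ≤ ci * D * (L₁ + cj * L₂) / (ci - cj) := by
  have hsub : (0:ℝ) < ci - cj := sub_pos.mpr hc
  have hci : (0:ℝ) < ci := lt_trans hcj hc
  have key : g yi - (vi - ci * (vi - vj) / (ci - cj))
      = ci * ((g yi - g yj) + cj * (u yi - u yj)) / (ci - cj) := by
    field_simp [hvi, hvj]
    rw [hvi, hvj]
    ring
  rw [key, abs_div, abs_of_pos hsub, div_le_div_iff_of_pos_right hsub, abs_mul,
    abs_of_pos hci]
  have h1 : |g yi - g yj| ≤ L₁ * D := by
    calc |g yi - g yj| ≤ L₁ * |yi - yj| := hLipg yi yj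
    _ ≤ L₁ * D := by nlinarith
  have h2 : |u yi - u yj| ≤ L₂ * D := by
    calc |u yi - u yj| ≤ L₂ * |yi - yj| := hLipu yi yj
    _ ≤ L₂ * D := by nlinarith
  have h3 : |(g yi - g yj) + cj * (u yi - u yj)| ≤ L₁ * D + cj * (L₂ * D) := by
    calc |(g yi - g yj) + cj * (u yi - u yj)|
        ≤ |g yi - g yj| + |cj * (u yi - u yj)| := abs_add_le _ _
    _ = |g yi - g yj| + cj * |u yi - u yj| := by
        rw [abs_mul, abs_of_pos hcj]
    _ ≤ L₁ * D + cj * (L₂ * D) := by nlinarith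
  nlinarith
end
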